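/- arXiv:2403.19131 — 2 statements merged into one kernel-verified Lean document; each statement's English description precedes it below -/
import Mathlib

section
/- (Barbalat's Lemma) If ψ : [0,∞) → ℝ is uniformly continuous and the limit of ∫₀ᵗ ψ(s) ds as t → ∞ exists and is a real number, then ψ(t) → 0 as t → ∞. -/
/-- Barbalat's Lemma: if `ψ` is uniformly continuous on `[0,∞)` and
`∫₀ᵗ ψ(s) ds` converges to a real limit as `t → ∞`, then `ψ(t) → 0`. -/
theorem barbalat (ψ : ℝ → ℝ) (L : ℝ)
    (hψ : UniformContinuousOn ψ (Set.Ici 0))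
    (hL : Filter.Tendsto (fun t => ∫ s in (0:ℝ)..t, ψ s) Filter.atTop (nhds L)) :
    Filter.Tendsto ψ Filter.atTop (nhds 0) := by
  by_contra hcon
  rw [Metric.tendsto_atTop] at hcon
  push_neg at hcon
  obtain ⟨ε, hε, hbad⟩ := hcon
  obtain ⟨δ, hδ, hunif⟩ := Metric.uniformContinuousOn_iff.mp hψ (ε/2) (by linarith)
  have hεδ : 0 < ε * δ / 8 := by positivity
  obtain ⟨T₀, hT₀⟩ := Metric.tendsto_atTop.mp hL (ε*δ/8) hεδ
  obtain ⟨t, ht, hψt⟩ := hbad (max T₀ 0)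
  have ht0 : (0:ℝ) ≤ t := le_trans (le_max_right _ _) ht
  have htT : T₀ ≤ t := le_trans (le_max_left _ _) ht
  set b := t + δ/2 with hb
  have htb : t ≤ b := by simp only [hb]; linarith
  have hb0 : (0:ℝ) ≤ b := by linarith
  have hbT : T₀ ≤ b := by linarith
  have hcont : ContinuousOn ψ (Set.Ici 0) := hψ.continuousOn
  have hInt : ∀ x y : ℝ, 0 ≤ x → x ≤ y → IntervalIntegrable ψ MeasureTheory.volume x y := by
    intro x y hx hxy
    apply (hcont.mono ?_).intervalIntegrable
    intro z hz
    rw [Set.uIcc_of_le hxy] at hz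
    exact le_trans hx hz.1
  -- pointwise bound on [t, b]
  have hclose : ∀ s ∈ Set.Icc t b, |ψ s - ψ t| < ε / 2 := by
    intro s hs
    have hs0 : s ∈ Set.Ici (0:ℝ) := le_trans ht0 hs.1
    have hd : dist s t < δ := by
      rw [Real.dist_eq, abs_of_nonneg (by linarith [hs.1])]
      have := hs.2; simp only [hb] at this; linarith
    have := hunif s hs0 t (Set.mem_Ici.mpr ht0) hd
    rwa [Real.dist_eq] at this
  have hFb : |(∫ s in (0:ℝ)..b, ψ s) - L| < ε*δ/8 := by
    have := hT₀ b hbT; rwa [Real.dist_eq] at this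
  have hFt : |(∫ s in (0:ℝ)..t, ψ s) - L| < ε*δ/8 := by
    have := hT₀ t htT; rwa [Real.dist_eq] at this
  have hsplit : (∫ s in (0:ℝ)..b, ψ s) - (∫ s in (0:ℝ)..t, ψ s) = ∫ s in t..b, ψ s :=
    intervalIntegral.integral_interval_sub_left (hInt 0 b le_rfl hb0) (hInt 0 t le_rfl ht0)
  have hItb := hInt t b ht0 htb
  have hψtabs : ε ≤ |ψ t| := by
    have := hψt; rwa [Real.dist_eq, sub_zero] at this
  have habs : |∫ s in t..b, ψ s| < ε*δ/4 := by
    have h1 : |(∫ s in (0:ℝ)..b, ψ s) - (∫ s in (0:ℝ)..t, ψ s)| < ε*δ/4 := by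
      have htri := abs_sub_le ((∫ s in (0:ℝ)..b, ψ s)) L ((∫ s in (0:ℝ)..t, ψ s))
      rw [abs_sub_comm L] at htri
      linarith
    rwa [hsplit] at h1
  rcases abs_cases (ψ t) with ⟨heq, _⟩ | ⟨heq, _⟩
  · -- ψ t ≥ ε > 0
    have hpt : ε ≤ ψ t := by rw [← heq]; exact hψtabs
    have hlow : ∀ s ∈ Set.Icc t b, ε/2 ≤ ψ s := by
      intro s hs
      have := hclose s hs
      have := abs_lt.mp this
      linarith [this.1]
    have hmono := intervalIntegral.integral_mono_on htb (intervalIntegrable_const) hItb hlow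
    rw [intervalIntegral.integral_const] at hmono
    have hbt : b - t = δ/2 := by simp [hb]
    rw [hbt] at hmono
    have : ε*δ/4 ≤ ∫ s in t..b, ψ s := by
      have : (δ/2) • (ε/2) = ε*δ/4 := by simp [smul_eq_mul]; ring
      linarith [hmono, this ▸ hmono]
    have := le_abs_self (∫ s in t..b, ψ s)
    nlinarith [habs, hδ, hε]
  · -- ψ t ≤ -ε
    have hpt : ψ t ≤ -ε := by linarith [heq ▸ hψtabs]
    have hhigh : ∀ s ∈ Set.Icc t b, ψ s ≤ -(ε/2) := by
      intro s hs
      have := abs_lt.mp (hclose s hs)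
      linarith [this.2]
    have hmono := intervalIntegral.integral_mono_on htb hItb (intervalIntegrable_const) hhigh
    rw [intervalIntegral.integral_const] at hmono
    have hbt : b - t = δ/2 := by simp [hb]
    rw [hbt] at hmono
    have h2 : (∫ s in t..b, ψ s) ≤ -(ε*δ/4) := by
      have : (δ/2) • (-(ε/2)) = -(ε*δ/4) := by simp [smul_eq_mul]; ring
      linarith [this ▸ hmono]
    have := neg_abs_le (∫ s in t..b, ψ s)
    nlinarith [habs, hδ, hε]
end

section
/- Suppose m̃₁ : [0,∞) → ℝ satisfies m̃₁(t) → 0 as t → ∞, m̃₁ ≥ 0, and u : [0,∞) → [0,∞) is C¹ with u' = m̃₁(t) + u(α − u) for a constant α > 0. Then u(t) → α as t → ∞ provided liminf_{t→∞} u(t) > 0. -/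
open Filter Set

/-- If `u' = f` on `[a,b]` with `f ≤ -c` on the interior, then `u` decreases at rate `c`. -/
lemma decrease_of_deriv_le (u f : ℝ → ℝ) (a b c : ℝ) (hab : a ≤ b)
    (hderiv : ∀ t ∈ Set.Icc a b, HasDerivAt u (f t) t)
    (hf : ∀ t ∈ Set.Ioo a b, f t ≤ -c) :
    u b + c * b ≤ u a + c * a := by
  have hg : ∀ t ∈ Set.Icc a b, HasDerivAt (fun s => u s + c * s) (f t + c) t := by
    intro t ht
    have h1 : HasDerivAt (fun s : ℝ => c * s) (c * 1) t := (hasDerivAt_id t).const_mul c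
    have h2 := (hderiv t ht).add h1
    rw [mul_one] at h2
    exact h2
  have hanti : AntitoneOn (fun s => u s + c * s) (Set.Icc a b) := by
    apply antitoneOn_of_deriv_nonpos (convex_Icc a b)
    · exact fun t ht => ((hg t ht).continuousAt).continuousWithinAt
    · intro t ht
      rw [interior_Icc] at ht
      exact ((hg t (Set.mem_Icc_of_Ioo ht)).differentiableAt).differentiableWithinAt
    · intro t ht
      rw [interior_Icc] at ht
      rw [(hg t (Set.mem_Icc_of_Ioo ht)).deriv]
      have := hf t ht
      linarith
  exact hanti (Set.left_mem_Icc.2 hab) (Set.right_mem_Icc.2 hab) hab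

/-- Barrier lemma: if the vector field pushes down with speed `c` above level `β`
(for `t ≥ T`), and `u` is bounded below, then eventually `u ≤ β`. -/
lemma eventually_le_of_barrier (u f : ℝ → ℝ) (β c B T : ℝ) (hc : 0 < c) (hT : 0 ≤ T)
    (hderiv : ∀ t ≥ (0:ℝ), HasDerivAt u (f t) t)
    (hf : ∀ t ≥ T, β < u t → f t ≤ -c)
    (hlb : ∀ t ≥ (0:ℝ), B ≤ u t) :
    ∀ᶠ t in atTop, u t ≤ β := by
  have hcont : ∀ t ≥ (0:ℝ), ContinuousAt u t := fun t ht => (hderiv t ht).continuousAt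
  -- Step 1: find t₀ ≥ T with u t₀ ≤ β
  have step1 : ∃ t₀ ≥ T, u t₀ ≤ β := by
    by_contra h
    push_neg at h
    have hall : ∀ t ≥ T, β < u t := fun t ht => h t ht
    have h1 : B ≤ u T := hlb T hT
    have hq : 0 ≤ (u T - B + 1) / c := div_nonneg (by linarith) (le_of_lt hc)
    set X : ℝ := T + (u T - B + 1) / c with hX
    have hTX : T ≤ X := le_add_of_nonneg_right hq
    have hdec := decrease_of_deriv_le u f T X c hTX
      (fun t ht => hderiv t (le_trans hT ht.1))
      (fun t ht => hf t (le_of_lt ht.1) (hall t (le_of_lt ht.1)))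
    have hXval : c * X = c * T + (u T - B + 1) := by
      rw [hX]
      field_simp
    have hBX : B ≤ u X := hlb X (le_trans hT hTX)
    nlinarith
  obtain ⟨t₀, ht₀T, ht₀⟩ := step1
  -- Step 2: invariance, u t ≤ β for all t ≥ t₀
  rw [eventually_atTop]
  refine ⟨t₀, fun t₁ ht₁ => ?_⟩
  by_contra hcon
  push_neg at hcon
  set S : Set ℝ := {t ∈ Set.Icc t₀ t₁ | u t ≤ β} with hS
  have hcontOn : ContinuousOn u (Set.Icc t₀ t₁) := fun t ht =>
    ((hcont t (le_trans (le_trans hT ht₀T) ht.1)).continuousWithinAt)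
  have hSclosed : IsClosed S := by
    have : S = Set.Icc t₀ t₁ ∩ u ⁻¹' Set.Iic β := by
      ext t; simp [hS, Set.mem_setOf_eq, and_comm]
    rw [this]
    exact hcontOn.preimage_isClosed_of_isClosed isClosed_Icc isClosed_Iic
  have hSne : S.Nonempty := ⟨t₀, ⟨le_refl _, ht₁⟩, ht₀⟩
  have hSbdd : BddAbove S := ⟨t₁, fun t ht => ht.1.2⟩
  set s := sSup S with hs
  have hsmem : s ∈ S := hSclosed.csSup_mem hSne hSbdd
  have hst₁ : s ≤ t₁ := hsmem.1.2
  have hst₀ : t₀ ≤ s := hsmem.1.1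
  have husβ : u s ≤ β := hsmem.2
  have hIoo : ∀ t ∈ Set.Ioo s t₁, β < u t := by
    intro t ht
    by_contra hle
    push_neg at hle
    have : t ∈ S := ⟨⟨le_trans hst₀ (le_of_lt ht.1), le_of_lt ht.2⟩, hle⟩
    exact absurd (le_csSup hSbdd this) (not_le.2 ht.1)
  have hdec := decrease_of_deriv_le u f s t₁ c hst₁
    (fun t ht => hderiv t (le_trans (le_trans hT ht₀T) (le_trans hst₀ ht.1)))
    (fun t ht => hf t (le_trans ht₀T (le_trans hst₀ (le_of_lt ht.1))) (hIoo t ht))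
  nlinarith

/-- Perturbed logistic convergence: if `u' = m̃₁(t) + u(α-u)` with `m̃₁ ≥ 0`,
`m̃₁ → 0`, `u` nonnegative and bounded with `liminf u > 0`, then `u → α`. -/
theorem perturbed_logistic_tendsto (α : ℝ) (hα : 0 < α)
    (m u : ℝ → ℝ)
    (hm_cont : Continuous m)
    (hm_nonneg : ∀ t ≥ (0:ℝ), 0 ≤ m t)
    (hm_lim : Tendsto m atTop (nhds 0))
    (hu_nonneg : ∀ t ≥ (0:ℝ), 0 ≤ u t)
    (hu_bdd : ∃ C, ∀ t ≥ (0:ℝ), u t ≤ C)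
    (hu_deriv : ∀ t ≥ (0:ℝ), HasDerivAt u (m t + u t * (α - u t)) t)
    (hliminf : 0 < Filter.liminf u Filter.atTop) :
    Tendsto u atTop (nhds α) := by
  obtain ⟨C, hC⟩ := hu_bdd
  set L := Filter.liminf u Filter.atTop with hLdef
  have hL : 0 < L := hliminf
  have hbdd : IsBoundedUnder (· ≥ ·) atTop u :=
    isBoundedUnder_of_eventually_ge (a := 0)
      ((eventually_ge_atTop (0:ℝ)).mono fun t ht => hu_nonneg t ht)
  have hevL : ∀ᶠ t in atTop, L / 2 < u t :=
    eventually_lt_of_lt_liminf (by linarith) hbdd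
  -- upper bound
  have hup : ∀ ε > (0:ℝ), ∀ᶠ t in atTop, u t ≤ α + ε := by
    intro ε hε
    obtain ⟨T, hT⟩ := eventually_atTop.1
      ((hm_lim.eventually_lt_const (show (0:ℝ) < ε * α / 2 by positivity)).and
        (eventually_ge_atTop (0:ℝ)))
    refine eventually_le_of_barrier u (fun t => m t + u t * (α - u t)) (α + ε) (ε * α / 2) 0
      (max T 0) (by positivity) (le_max_right _ _) hu_deriv ?_ hu_nonneg
    intro t ht hgt
    have h1 : m t < ε * α / 2 := (hT t (le_trans (le_max_left _ _) ht)).1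
    have ht0 : (0:ℝ) ≤ t := le_trans (le_max_right _ _) ht
    have key : (α + ε) * ε ≤ u t * (u t - α) :=
      mul_le_mul (le_of_lt hgt) (by linarith) (le_of_lt hε) (by nlinarith)
    nlinarith
  -- lower bound
  have hlow : ∀ ε > (0:ℝ), ∀ᶠ t in atTop, α - ε ≤ u t := by
    intro ε hε
    obtain ⟨T, hT⟩ := eventually_atTop.1 (hevL.and (eventually_ge_atTop (0:ℝ)))
    have hc : 0 < L / 2 * ε := by positivity
    have hbar := eventually_le_of_barrier (fun t => -u t)
      (fun t => -(m t + u t * (α - u t))) (-(α - ε)) (L / 2 * ε) (-C) (max T 0) hc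
      (le_max_right _ _) (fun t ht => (hu_deriv t ht).neg)
      ?_ (fun t ht => neg_le_neg (hC t ht))
    · refine hbar.mono fun t h => ?_
      have h' : -u t ≤ -(α - ε) := h
      linarith
    intro t ht hgt
    have htT : T ≤ t := le_trans (le_max_left _ _) ht
    have ht0 : (0:ℝ) ≤ t := le_trans (le_max_right _ _) ht
    have h2 : L / 2 < u t := (hT t htT).1
    have hm0 : 0 ≤ m t := hm_nonneg t ht0
    have hgt' : -(α - ε) < -u t := hgt
    have hult : u t < α - ε := by linarith
    have key : L / 2 * ε ≤ u t * (α - u t) :=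
      mul_le_mul (le_of_lt h2) (by linarith) (le_of_lt hε) (by linarith)
    simp only [neg_le_neg_iff]
    linarith
  rw [Metric.tendsto_nhds]
  intro ε hε
  filter_upwards [hup (ε / 2) (by linarith), hlow (ε / 2) (by linarith)] with t h1 h2
  rw [Real.dist_eq, abs_lt]
  constructor <;> linarith
end
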